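/- Let m ≥ 2 and let λ_1 ≥ λ_2 ≥ … ≥ 0 be the nonincreasing rearrangement of a family {a_{k,j} : j = 1,…,d_k^m, k ≥ 0} of nonnegative numbers, where d_k^m ≍ k^{m−1}. If there exists C > 0 such that Σ_{k≥n} Σ_{j=1}^{d_k^m} a_{k,j} ≤ C n^{−β} for all n ≥ 1, and the a_{k,j} are nonincreasing in k (a_{n,j} ≤ a_{k,l} whenever n ≥ k), then λ_n = O(n^{−1−β/m}) as n → ∞. -/

import Mathlib

/-!
Among the first `M + 1` rearranged values at most `N(K) = ∑_{k<K} d_k ≲ K^m` come from the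
rows `k < K`; the remaining ones lie in the tail beyond row `K` and are each at least `λ_M`, so
`(M + 1 - N(K)) λ_M ≤ C K^{-β}`. Choosing `K ≍ M^{1/m}` with `N(K) ≤ M / 2` gives
`λ_M ≤ 2 C K^{-β} / M ≍ M^{-1-β/m}`; the finitely many small `M` are absorbed into the constant
since `λ` is bounded.
-/

open Finset Real

theorem rearrangement_mul_le_tsum_subtype {α : Type*} {g : α → ℝ} (hg : ∀ x, 0 ≤ g x)
    (hsum : Summable g) {lam : ℕ → ℝ} (hlam_anti : Antitone lam) {e : ℕ ≃ α}
    (hlam : ∀ n, lam n = g (e n))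
    {P : α → Prop} {t : Finset α} (ht : ∀ x, ¬ P x → x ∈ t) (M : ℕ) :
    ((M + 1 : ℝ) - #t) * lam M ≤ ∑' x : {x // P x}, g x := by
  classical
  set T := (range (M + 1)).filter (fun i => P (e i))
  have hcompl : #((range (M + 1)).filter (fun i => ¬ P (e i))) ≤ #t :=
    card_le_card_of_injOn e (fun i hi => ht _ (mem_filter.1 hi).2) e.injective.injOn
  have hT : (M + 1 : ℝ) - #t ≤ #T := by
    have hsplit : #T + #((range (M + 1)).filter (fun i => ¬ P (e i))) = M + 1 :=
      (card_filter_add_card_filter_not _).trans (card_range _)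
    have : (M + 1 : ℝ) ≤ #T + #t := by exact_mod_cast (by omega : M + 1 ≤ #T + #t)
    linarith
  have hT_sum : ∑ i ∈ T, lam i ≤ ∑' x : {x // P x}, g x := by
    refine le_of_le_of_eq ?_ (tsum_subtype {x | P x} g).symm
    calc ∑ i ∈ T, lam i = ∑ x ∈ T.map e.toEmbedding, {x | P x}.indicator g x := by
          rw [sum_map]
          refine sum_congr rfl fun i hi => ?_
          rw [hlam]
          exact (Set.indicator_of_mem (show e i ∈ {x | P x} from (mem_filter.1 hi).2) g).symm
      _ ≤ _ := (hsum.indicator _).sum_le_tsum _ fun x _ => Set.indicator_nonneg (fun x _ => hg x) x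
  calc ((M + 1 : ℝ) - #t) * lam M ≤ #T * lam M :=
        mul_le_mul_of_nonneg_right hT (hlam M ▸ hg _)
    _ ≤ ∑ i ∈ T, lam i := by
        simpa [nsmul_eq_mul] using card_nsmul_le_sum T lam (lam M) fun i hi =>
          hlam_anti (Nat.lt_succ_iff.1 (mem_range.1 (mem_filter.1 hi).1))
    _ ≤ _ := hT_sum

theorem sum_range_le_mul_pow {f : ℕ → ℝ} {c : ℝ} {m : ℕ} (hm : 1 ≤ m) (hf₀ : 0 ≤ f 0)
    (hc : 0 ≤ c) (hf : ∀ k : ℕ, 1 ≤ k → f k ≤ c * (k : ℝ) ^ (m - 1)) {K : ℕ} (hK : 1 ≤ K) :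
    ∑ k ∈ range K, f k ≤ (f 0 + c) * (K : ℝ) ^ m := by
  obtain ⟨K, rfl⟩ : ∃ K', K = K' + 1 := ⟨K - 1, by omega⟩
  have hbound : ∀ k ∈ range K, f (k + 1) ≤ c * ((K + 1 : ℕ) : ℝ) ^ (m - 1) := fun k hk =>
    (hf (k + 1) (by omega)).trans <| by
      gcongr
      exact_mod_cast (mem_range.1 hk).le
  have hpow : ((K + 1 : ℕ) : ℝ) ^ (m - 1) * (K + 1 : ℕ) = ((K + 1 : ℕ) : ℝ) ^ m := by
    rw [← pow_succ, Nat.sub_add_cancel hm]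
  have hone : (1 : ℝ) ≤ ((K + 1 : ℕ) : ℝ) ^ m := one_le_pow₀ (by simp)
  calc ∑ k ∈ range (K + 1), f k = ∑ k ∈ range K, f (k + 1) + f 0 := sum_range_succ' _ _
    _ ≤ K * (c * ((K + 1 : ℕ) : ℝ) ^ (m - 1)) + f 0 := by
        simpa [nsmul_eq_mul] using add_le_add_right (sum_le_card_nsmul _ _ _ hbound) (f 0)
    _ ≤ (f 0 + c) * ((K + 1 : ℕ) : ℝ) ^ m := by
        have : (K : ℝ) ≤ (K + 1 : ℕ) := by push_cast; linarith
        nlinarith [mul_le_mul_of_nonneg_right this (mul_nonneg hc (by positivity :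
          (0 : ℝ) ≤ ((K + 1 : ℕ) : ℝ) ^ (m - 1)))]

theorem exists_pow_le_lt_succ_pow {m : ℕ} (hm : m ≠ 0) {y : ℝ} (hy : 1 ≤ y) :
    ∃ K : ℕ, 1 ≤ K ∧ (K : ℝ) ^ m ≤ y ∧ y < ((K : ℝ) + 1) ^ m := by
  set x := y ^ ((m : ℝ)⁻¹)
  have hx : x ^ m = y := rpow_inv_natCast_pow (by linarith) hm
  have hx₁ : 1 ≤ x := one_le_rpow hy (by positivity)
  refine ⟨⌊x⌋₊, Nat.le_floor (by simpa using hx₁), ?_, ?_⟩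
  · exact hx ▸ pow_le_pow_left₀ (by positivity) (Nat.floor_le (by linarith)) m
  · exact hx ▸ pow_lt_pow_left₀ (Nat.lt_floor_add_one x) (by linarith) hm

theorem mul_rpow_le_of_forall_sub_mul_le {lam : ℕ → ℝ} (hlam : ∀ n, 0 ≤ lam n) {m : ℕ}
    (hm : m ≠ 0) {A C β : ℝ} (hA : 0 < A) (hC : 0 ≤ C) (hβ : 0 ≤ β)
    (h : ∀ K M : ℕ, 1 ≤ K → ((M + 1 : ℝ) - A * (K : ℝ) ^ m) * lam M ≤ C * (K : ℝ) ^ (-β))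
    {M : ℕ} (hM : 2 * A ≤ M) :
    lam M * (M : ℝ) ^ (1 + β / m) ≤ 2 * C * (2 ^ (m + 1) * A) ^ (β / m) := by
  have hM₀ : (0 : ℝ) < M := by linarith
  obtain ⟨K, hK, hKy, hyK⟩ := exists_pow_le_lt_succ_pow hm
    (show 1 ≤ (M : ℝ) / (2 * A) by rw [le_div_iff₀ (by positivity)]; linarith)
  have hK₀ : (0 : ℝ) < K := by exact_mod_cast hK
  rw [le_div_iff₀ (by positivity)] at hKy
  rw [div_lt_iff₀ (by positivity)] at hyK
  -- `K` is the largest integer with `A K^m ≤ M / 2`, and `K + 1 ≤ 2 K`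
  have hMK : (M : ℝ) ≤ 2 ^ (m + 1) * A * (K : ℝ) ^ m := by
    have hK₁ : (1 : ℝ) ≤ K := by exact_mod_cast hK
    have : ((K : ℝ) + 1) ^ m ≤ (2 * K) ^ m := pow_le_pow_left₀ (by positivity) (by linarith) m
    rw [mul_pow] at this
    nlinarith [pow_succ (2 : ℝ) m]
  have hhalf : (M : ℝ) / 2 * lam M ≤ C * (K : ℝ) ^ (-β) :=
    (mul_le_mul_of_nonneg_right (by linarith) (hlam M)).trans (h K M hK)
  have hMpow : (M : ℝ) ^ (β / m) ≤ (2 ^ (m + 1) * A) ^ (β / m) * (K : ℝ) ^ β := by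
    have hm' : (m : ℝ) ≠ 0 := by exact_mod_cast hm
    calc (M : ℝ) ^ (β / m) ≤ (2 ^ (m + 1) * A * (K : ℝ) ^ m) ^ (β / m) :=
          rpow_le_rpow hM₀.le hMK (by positivity)
      _ = (2 ^ (m + 1) * A) ^ (β / m) * (K : ℝ) ^ β := by
          rw [mul_rpow (by positivity) (by positivity), ← rpow_natCast_mul hK₀.le,
            mul_div_cancel₀ _ hm']
  calc lam M * (M : ℝ) ^ (1 + β / m) = 2 * ((M : ℝ) / 2 * lam M) * (M : ℝ) ^ (β / m) := by
        rw [rpow_add hM₀, rpow_one]; ring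
    _ ≤ 2 * (C * (K : ℝ) ^ (-β)) * ((2 ^ (m + 1) * A) ^ (β / m) * (K : ℝ) ^ β) := by
        gcongr
    _ = 2 * C * (2 ^ (m + 1) * A) ^ (β / m) := by
        rw [rpow_neg hK₀.le]
        field_simp

theorem Antitone.exists_le_mul_rpow_neg {f : ℕ → ℝ} (hf : Antitone f) (hf₀ : ∀ n, 0 ≤ f n)
    {γ D M₀ : ℝ} (hγ : 0 ≤ γ) (hD : 0 < D)
    (hev : ∀ n : ℕ, M₀ ≤ n → f n * (n : ℝ) ^ γ ≤ D) :
    ∃ C > 0, ∀ n : ℕ, 1 ≤ n → f n ≤ C * (n : ℝ) ^ (-γ) := by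
  set M₁ := max M₀ 1
  refine ⟨D + f 0 * M₁ ^ γ, add_pos_of_pos_of_nonneg hD (mul_nonneg (hf₀ 0) (by positivity)),
    fun n hn => ?_⟩
  have hn₀ : (0 : ℝ) < n := by exact_mod_cast hn
  rw [add_mul, mul_assoc]
  by_cases hM : M₀ ≤ n
  · have : f n ≤ D * (n : ℝ) ^ (-γ) := by
      rw [rpow_neg hn₀.le, ← div_eq_mul_inv, le_div_iff₀ (by positivity)]
      exact hev n hM
    nlinarith [hf₀ 0, (by positivity : (0 : ℝ) ≤ M₁ ^ γ * (n : ℝ) ^ (-γ))]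
  · have h₁ : 1 ≤ M₁ ^ γ * (n : ℝ) ^ (-γ) := by
      rw [rpow_neg hn₀.le, ← div_eq_mul_inv, ← div_rpow (by positivity) hn₀.le]
      exact one_le_rpow ((one_le_div hn₀).2 ((not_le.1 hM).le.trans (le_max_left _ _))) hγ
    calc f n ≤ f 0 * (M₁ ^ γ * (n : ℝ) ^ (-γ)) :=
          (hf (Nat.zero_le n)).trans (le_mul_of_one_le_right (hf₀ 0) h₁)
      _ ≤ _ := le_add_of_nonneg_left (by positivity)

theorem eigenvalue_rearrangement_decay_general
    (m : ℕ) (hm : 2 ≤ m) (d : ℕ → ℕ)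
    (c₁ c₂ : ℝ) (hc₂ : 0 < c₂)
    (hd : ∀ k : ℕ, 1 ≤ k → c₁ * (k : ℝ) ^ (m - 1) ≤ (d k : ℝ) ∧
      (d k : ℝ) ≤ c₂ * (k : ℝ) ^ (m - 1))
    (a : (k : ℕ) → Fin (d k) → ℝ) (ha : ∀ k j, 0 ≤ a k j)
    (hsum : Summable fun i : Σ k : ℕ, Fin (d k) => a i.1 i.2)
    (β C : ℝ) (hβ : 0 < β) (hC : 0 < C)
    (htail : ∀ n : ℕ, 1 ≤ n →
      (∑' p : {p : Σ k : ℕ, Fin (d k) // n ≤ p.1}, a p.1.1 p.1.2) ≤ C * (n : ℝ) ^ (-β))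
    (lam : ℕ → ℝ) (hlam_mono : Antitone lam)
    (e : ℕ ≃ Σ k : ℕ, Fin (d k)) (hlam : ∀ n : ℕ, lam n = a (e n).1 (e n).2) :
    ∃ C' > 0, ∀ n : ℕ, 1 ≤ n → lam n ≤ C' * (n : ℝ) ^ (-(1 + β / m)) := by
  have hlam_nonneg : ∀ n, 0 ≤ lam n := fun n => hlam n ▸ ha _ _
  set A : ℝ := d 0 + c₂
  have hA : 0 < A := by positivity
  have hhead : ∀ K : ℕ, 1 ≤ K →
      (#((range K).sigma fun k => (univ : Finset (Fin (d k)))) : ℝ) ≤ A * (K : ℝ) ^ m := by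
    intro K hK
    rw [card_sigma]
    push_cast [card_univ, Fintype.card_fin]
    exact sum_range_le_mul_pow (by omega) (by positivity) hc₂.le (fun k hk => (hd k hk).2) hK
  have hcount : ∀ K M : ℕ, 1 ≤ K →
      ((M + 1 : ℝ) - A * (K : ℝ) ^ m) * lam M ≤ C * (K : ℝ) ^ (-β) := by
    intro K M hK
    have hrows := rearrangement_mul_le_tsum_subtype (g := fun p => a p.1 p.2)
      (P := fun p => K ≤ p.1) (t := (range K).sigma fun k => (univ : Finset (Fin (d k))))
      (fun p => ha p.1 p.2) hsum hlam_mono hlam (fun p hp => by simpa using hp) M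
    calc ((M + 1 : ℝ) - A * (K : ℝ) ^ m) * lam M
        ≤ ((M + 1 : ℝ) - #((range K).sigma fun k => (univ : Finset (Fin (d k))))) * lam M :=
          mul_le_mul_of_nonneg_right (by linarith [hhead K hK]) (hlam_nonneg M)
      _ ≤ C * (K : ℝ) ^ (-β) := hrows.trans (htail K hK)
  exact hlam_mono.exists_le_mul_rpow_neg hlam_nonneg (by positivity) (by positivity)
    fun M hM => mul_rpow_le_of_forall_sub_mul_le hlam_nonneg (by omega) hA hC.le hβ.le hcount hM

/-- Let `m ≥ 2` and let `λ` be the nonincreasing rearrangement (realized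
by a bijection `e`) of a family `{a_{k,j} : j < d k, k ≥ 0}` of nonnegative numbers with
`d k ≍ k^{m−1}`.  If `Σ_{k≥n} Σ_j a_{k,j} ≤ C n^{−β}` for all `n ≥ 1` and the `a_{k,j}`
are nonincreasing in `k`, then `λ_n = O(n^{−1−β/m})`. -/
theorem eigenvalue_rearrangement_decay
    (m : ℕ) (hm : 2 ≤ m) (d : ℕ → ℕ)
    (c₁ c₂ : ℝ) (hc₁ : 0 < c₁) (hc₂ : 0 < c₂)
    (hd : ∀ k : ℕ, 1 ≤ k → c₁ * (k : ℝ) ^ (m - 1) ≤ (d k : ℝ) ∧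
      (d k : ℝ) ≤ c₂ * (k : ℝ) ^ (m - 1))
    (a : (k : ℕ) → Fin (d k) → ℝ) (ha : ∀ k j, 0 ≤ a k j)
    (hamono : ∀ (k n : ℕ), k ≤ n → ∀ (j : Fin (d n)) (l : Fin (d k)), a n j ≤ a k l)
    (hsum : Summable fun i : Σ k : ℕ, Fin (d k) => a i.1 i.2)
    (β C : ℝ) (hβ : 0 < β) (hC : 0 < C)
    (htail : ∀ n : ℕ, 1 ≤ n →
      (∑' p : {p : Σ k : ℕ, Fin (d k) // n ≤ p.1}, a p.1.1 p.1.2) ≤ C * (n : ℝ) ^ (-β))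
    (lam : ℕ → ℝ) (hlam_mono : Antitone lam)
    (e : ℕ ≃ Σ k : ℕ, Fin (d k)) (hlam : ∀ n : ℕ, lam n = a (e n).1 (e n).2) :
    ∃ C' > 0, ∀ n : ℕ, 1 ≤ n → lam n ≤ C' * (n : ℝ) ^ (-(1 + β / m)) :=
  eigenvalue_rearrangement_decay_general m hm d c₁ c₂ hc₂ hd a ha hsum β C hβ hC htail lam hlam_mono
    e hlam
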